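/- arXiv:2201.02607 — 4 statements merged into one kernel-verified Lean document; each statement's English description precedes it below -/
import Mathlib

section
/- Let μ⁻, c⁻ > 0 be given and let (μ⁺, c⁺) and (μ̃⁺, c̃⁺) be two pairs of positive reals. For a pair (μ, c) and slowness b, define the reflection coefficient r(μ, c; b) = (μ⁻·√((c⁻)⁻² − b²) − μ·√(c⁻² − b²))/(μ⁻·√((c⁻)⁻² − b²) + μ·√(c⁻² − b²)). Suppose b₁, b₂ ≥ 0 satisfy b₁² ≠ b₂² and bᵢ² < min{(c⁻)⁻², (c⁺)⁻², (c̃⁺)⁻²} for i = 1, 2. If r(μ⁺, c⁺; bᵢ) = r(μ̃⁺, c̃⁺; bᵢ) for i = 1, 2, then μ⁺ = μ̃⁺ and c⁺ = c̃⁺; consequently the densities ρ⁺ = μ⁺/(c⁺)² and ρ̃⁺ = μ̃⁺/(c̃⁺)² also agree. -/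
/-- The acoustic reflection coefficient at slowness `b`, for parameter `μm`, speed `cm`
above the interface and parameter `μ`, speed `c` below the interface. -/
noncomputable def acousticReflCoef (μm cm μ c b : ℝ) : ℝ :=
  (μm * Real.sqrt (cm⁻¹ ^ 2 - b ^ 2) - μ * Real.sqrt (c⁻¹ ^ 2 - b ^ 2)) /
  (μm * Real.sqrt (cm⁻¹ ^ 2 - b ^ 2) + μ * Real.sqrt (c⁻¹ ^ 2 - b ^ 2))

/-- Cancellation lemma: equal Möbius-type ratios with positive entries force equality. -/
lemma refl_cancel {A B B' : ℝ} (hA : 0 < A) (hB : 0 < B) (hB' : 0 < B')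
    (h : (A - B) / (A + B) = (A - B') / (A + B')) : B = B' := by
  have hd : (A + B) ≠ 0 := by positivity
  have hd' : (A + B') ≠ 0 := by positivity
  have := (div_eq_div_iff hd hd').mp h
  nlinarith

/-- The acoustic reflection coefficient at two different non-glancing slownesses
uniquely determines both material parameters infinitesimally below the interface
when the parameters above the interface are known. -/
theorem acoustic_zeroth_order_recovery
    (μm cm μp cp μt ct : ℝ)
    (hμm : 0 < μm) (hcm : 0 < cm) (hμp : 0 < μp) (hcp : 0 < cp)
    (hμt : 0 < μt) (hct : 0 < ct)
    (b₁ b₂ : ℝ) (hb₁ : 0 ≤ b₁) (hb₂ : 0 ≤ b₂) (hne : b₁ ^ 2 ≠ b₂ ^ 2)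
    (h1 : b₁ ^ 2 < min (cm⁻¹ ^ 2) (min (cp⁻¹ ^ 2) (ct⁻¹ ^ 2)))
    (h2 : b₂ ^ 2 < min (cm⁻¹ ^ 2) (min (cp⁻¹ ^ 2) (ct⁻¹ ^ 2)))
    (hr1 : acousticReflCoef μm cm μp cp b₁ = acousticReflCoef μm cm μt ct b₁)
    (hr2 : acousticReflCoef μm cm μp cp b₂ = acousticReflCoef μm cm μt ct b₂) :
    μp = μt ∧ cp = ct ∧ μp / cp ^ 2 = μt / ct ^ 2 := by
  simp only [lt_min_iff] at h1 h2
  obtain ⟨h1m, h1p, h1t⟩ := h1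
  obtain ⟨h2m, h2p, h2t⟩ := h2
  -- positivity of all the square roots
  have sq_pos : ∀ {x b : ℝ}, b ^ 2 < x → 0 < Real.sqrt (x - b ^ 2) := fun h =>
    Real.sqrt_pos.mpr (by linarith)
  have key : ∀ b : ℝ, b ^ 2 < cm⁻¹ ^ 2 → b ^ 2 < cp⁻¹ ^ 2 → b ^ 2 < ct⁻¹ ^ 2 →
      acousticReflCoef μm cm μp cp b = acousticReflCoef μm cm μt ct b →
      μp ^ 2 * (cp⁻¹ ^ 2 - b ^ 2) = μt ^ 2 * (ct⁻¹ ^ 2 - b ^ 2) := by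
    intro b hm hp ht hr
    have hA : 0 < μm * Real.sqrt (cm⁻¹ ^ 2 - b ^ 2) := mul_pos hμm (sq_pos hm)
    have hB : 0 < μp * Real.sqrt (cp⁻¹ ^ 2 - b ^ 2) := mul_pos hμp (sq_pos hp)
    have hB' : 0 < μt * Real.sqrt (ct⁻¹ ^ 2 - b ^ 2) := mul_pos hμt (sq_pos ht)
    have heq := refl_cancel hA hB hB' hr
    have hsq := congrArg (· ^ 2) heq
    simp only [mul_pow, Real.sq_sqrt (by linarith : (0:ℝ) ≤ cp⁻¹ ^ 2 - b ^ 2),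
      Real.sq_sqrt (by linarith : (0:ℝ) ≤ ct⁻¹ ^ 2 - b ^ 2)] at hsq
    exact hsq
  have e1 := key b₁ h1m h1p h1t hr1
  have e2 := key b₂ h2m h2p h2t hr2
  have hμ2 : μp ^ 2 = μt ^ 2 := by
    have hd : b₁ ^ 2 - b₂ ^ 2 ≠ 0 := sub_ne_zero.mpr hne
    have : μp ^ 2 * (b₁ ^ 2 - b₂ ^ 2) = μt ^ 2 * (b₁ ^ 2 - b₂ ^ 2) := by ring_nf; nlinarith
    exact mul_right_cancel₀ hd this
  have hμ : μp = μt := by nlinarith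
  subst hμ
  have hμp2 : (μp ^ 2 : ℝ) ≠ 0 := by positivity
  have hcinv : cp⁻¹ ^ 2 - b₁ ^ 2 = ct⁻¹ ^ 2 - b₁ ^ 2 := mul_left_cancel₀ hμp2 e1
  have hcinv2 : cp⁻¹ ^ 2 = ct⁻¹ ^ 2 := by linarith
  have hinv : cp⁻¹ = ct⁻¹ :=
    (pow_left_inj₀ (inv_pos.mpr hcp).le (inv_pos.mpr hct).le two_ne_zero).mp hcinv2
  have hc : cp = ct := by
    have := congrArg (·⁻¹) hinv
    simpa using this
  exact ⟨rfl, hc, by rw [hc]⟩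
end

section
/- Let μ⁻, c⁻ > 0 be given (the shear modulus and shear wave speed above the interface) and let (μ⁺, c⁺) and (μ̃⁺, c̃⁺) be two pairs of positive reals (candidate shear modulus and shear speed below the interface). For a pair (μ, c) and slowness b, define r₃₃(μ, c; b) = (μ⁻·√((c⁻)⁻² − b²) − μ·√(c⁻² − b²))/(μ⁻·√((c⁻)⁻² − b²) + μ·√(c⁻² − b²)). Suppose b₁, b₂ ≥ 0 satisfy b₁² ≠ b₂² and bᵢ² < min{(c⁻)⁻², (c⁺)⁻², (c̃⁺)⁻²} for i = 1, 2. If r₃₃(μ⁺, c⁺; bᵢ) = r₃₃(μ̃⁺, c̃⁺; bᵢ) for i = 1, 2, then μ⁺ = μ̃⁺, c⁺ = c̃⁺, and the densities ρ⁺ = μ⁺/(c⁺)² and ρ̃⁺ = μ̃⁺/(c̃⁺)² agree. -/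
/-- The (3,3) entry of the elastic reflection matrix at slowness `b`: shear modulus
`μm` and shear speed `cm` above the interface, `μ` and `c` below. -/
noncomputable def elasticR33 (μm cm μ c b : ℝ) : ℝ :=
  (μm * Real.sqrt (cm⁻¹ ^ 2 - b ^ 2) - μ * Real.sqrt (c⁻¹ ^ 2 - b ^ 2)) /
  (μm * Real.sqrt (cm⁻¹ ^ 2 - b ^ 2) + μ * Real.sqrt (c⁻¹ ^ 2 - b ^ 2))

/-- From equality of `r₃₃` at a non-glancing slowness, the normal shear impedances
below the interface agree (after squaring). -/
lemma elastic_r33_key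
    (μm cm μp cp μt ct : ℝ)
    (hμm : 0 < μm) (hμp : 0 < μp) (hμt : 0 < μt)
    (b : ℝ)
    (hm : b ^ 2 < cm⁻¹ ^ 2) (hp : b ^ 2 < cp⁻¹ ^ 2) (ht : b ^ 2 < ct⁻¹ ^ 2)
    (hr : elasticR33 μm cm μp cp b = elasticR33 μm cm μt ct b) :
    μp ^ 2 * (cp⁻¹ ^ 2 - b ^ 2) = μt ^ 2 * (ct⁻¹ ^ 2 - b ^ 2) := by
  set A := μm * Real.sqrt (cm⁻¹ ^ 2 - b ^ 2) with hA
  set P := μp * Real.sqrt (cp⁻¹ ^ 2 - b ^ 2) with hP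
  set T := μt * Real.sqrt (ct⁻¹ ^ 2 - b ^ 2) with hT
  have hA0 : 0 < A := mul_pos hμm (Real.sqrt_pos.2 (by linarith))
  have hP0 : 0 < P := mul_pos hμp (Real.sqrt_pos.2 (by linarith))
  have hT0 : 0 < T := mul_pos hμt (Real.sqrt_pos.2 (by linarith))
  have hr' : (A - P) / (A + P) = (A - T) / (A + T) := hr
  have hPT : P = T := by
    have h := (div_eq_div_iff (by linarith) (by linarith)).1 hr'
    nlinarith
  have hsq : P ^ 2 = T ^ 2 := by rw [hPT]
  have e1 : P ^ 2 = μp ^ 2 * (cp⁻¹ ^ 2 - b ^ 2) := by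
    rw [hP, mul_pow, Real.sq_sqrt (by linarith)]
  have e2 : T ^ 2 = μt ^ 2 * (ct⁻¹ ^ 2 - b ^ 2) := by
    rw [hT, mul_pow, Real.sq_sqrt (by linarith)]
  rw [← e1, ← e2, hsq]

/-- The `r₃₃` entry of the elastic reflection operator at two different non-glancing
slownesses uniquely determines the shear modulus, shear speed, and hence the density
infinitesimally below the interface, given the parameters above. -/
theorem elastic_r33_recovery
    (μm cm μp cp μt ct : ℝ)
    (hμm : 0 < μm) (hcm : 0 < cm) (hμp : 0 < μp) (hcp : 0 < cp)
    (hμt : 0 < μt) (hct : 0 < ct)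
    (b₁ b₂ : ℝ) (hb₁ : 0 ≤ b₁) (hb₂ : 0 ≤ b₂) (hne : b₁ ^ 2 ≠ b₂ ^ 2)
    (h1 : b₁ ^ 2 < min (cm⁻¹ ^ 2) (min (cp⁻¹ ^ 2) (ct⁻¹ ^ 2)))
    (h2 : b₂ ^ 2 < min (cm⁻¹ ^ 2) (min (cp⁻¹ ^ 2) (ct⁻¹ ^ 2)))
    (hr1 : elasticR33 μm cm μp cp b₁ = elasticR33 μm cm μt ct b₁)
    (hr2 : elasticR33 μm cm μp cp b₂ = elasticR33 μm cm μt ct b₂) :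
    μp = μt ∧ cp = ct ∧ μp / cp ^ 2 = μt / ct ^ 2 := by
  simp only [lt_min_iff] at h1 h2
  have k1 := elastic_r33_key μm cm μp cp μt ct hμm hμp hμt b₁
    h1.1 h1.2.1 h1.2.2 hr1
  have k2 := elastic_r33_key μm cm μp cp μt ct hμm hμp hμt b₂
    h2.1 h2.2.1 h2.2.2 hr2
  have hμ2 : μp ^ 2 = μt ^ 2 := by
    have hd : b₁ ^ 2 - b₂ ^ 2 ≠ 0 := sub_ne_zero.2 hne
    have : (μp ^ 2 - μt ^ 2) * (b₁ ^ 2 - b₂ ^ 2) = 0 := by nlinarith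
    rcases mul_eq_zero.1 this with h | h
    · linarith [sub_eq_zero.1 h]
    · exact absurd h hd
  have hμ : μp = μt := by nlinarith
  have hc2 : cp⁻¹ ^ 2 = ct⁻¹ ^ 2 := by
    rw [hμ] at k1
    have := mul_left_cancel₀ (pow_ne_zero 2 hμt.ne') k1
    linarith
  have hc : cp = ct := by
    have hi : cp⁻¹ = ct⁻¹ := by
      have h1 : (0:ℝ) < cp⁻¹ := inv_pos.2 hcp
      have h2 : (0:ℝ) < ct⁻¹ := inv_pos.2 hct
      have hfac : (cp⁻¹ - ct⁻¹) * (cp⁻¹ + ct⁻¹) = 0 := by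
        have : cp⁻¹ ^ 2 - ct⁻¹ ^ 2 = 0 := by linarith
        linear_combination this
      rcases mul_eq_zero.1 hfac with h | h
      · linarith
      · linarith
    exact inv_injective hi
  exact ⟨hμ, hc, by rw [hμ, hc]⟩
end

section
/- Let n ≥ 1, let U ⊆ ℝⁿ be open, and let b : ℝⁿ → ℝ be a smooth (C^∞) function such that ‖∇b(x)‖ = 1 for every x ∈ U. Then for every natural number J ≥ 1 and every x ∈ U, ⟨∇(y ↦ tr(H(y)^J))(x), ∇b(x)⟩ = −J·tr(H(x)^{J+1}), where H(y) is the Hessian matrix of b at y and H^J its J-th matrix power. -/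
/-- The `i`-th partial derivative `∂ᵢ b` at `x`. -/
noncomputable def pd {n : ℕ} (b : (Fin n → ℝ) → ℝ) (i : Fin n) (x : Fin n → ℝ) : ℝ :=
  fderiv ℝ b x (Pi.single i 1)

/-- The Hessian matrix of `b` at `x`, with entries `∂ᵢ∂ⱼ b (x)`. -/
noncomputable def hess {n : ℕ} (b : (Fin n → ℝ) → ℝ) (x : Fin n → ℝ) :
    Matrix (Fin n) (Fin n) ℝ :=
  Matrix.of fun i j => pd (pd b j) i x

/-!
Differentiating `‖∇b‖² = 1` gives `H ∇b = 0` on `U`. Differentiating this once more and using the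
symmetry of third derivatives, the derivative of `H` along `∇b` is `-H²`. The product rule for
matrix powers and the cyclicity of the trace give `∂_v tr(H^J) = J tr(H^(J-1) ∂_v H)`, hence
`∂_{∇b} tr(H^J) = -J tr(H^(J+1))`.
-/

open Finset

section MatrixCalculus

variable {𝕜 E ι κ : Type*} [NontriviallyNormedField 𝕜] [NormedAddCommGroup E] [NormedSpace 𝕜 E]
  [Fintype ι] [Fintype κ] {x : E}

open ContinuousLinearMap in
theorem fderiv_sum_mul_apply {u w : κ → E → 𝕜} (hu : ∀ l, DifferentiableAt 𝕜 (u l) x)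
    (hw : ∀ l, DifferentiableAt 𝕜 (w l) x) (v : E) :
    fderiv 𝕜 (fun y => ∑ l, u l y * w l y) x v
      = ∑ l, (fderiv 𝕜 (u l) x v * w l x + u l x * fderiv 𝕜 (w l) x v) := by
  rw [fderiv_fun_sum (A := fun l y => u l y * w l y) fun l _ => (hu l).mul (hw l)]
  simp only [_root_.sum_apply, fderiv_fun_mul (hu _) (hw _), add_apply, smul_apply, smul_eq_mul]
  exact sum_congr rfl fun l _ => by ring

noncomputable def matrixFDeriv {m : Type*} (M : E → Matrix m ι 𝕜) (x v : E) : Matrix m ι 𝕜 :=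
  Matrix.of fun k l => fderiv 𝕜 (fun y => M y k l) x v

theorem differentiableAt_mul_apply {m n : Type*} {M : E → Matrix m κ 𝕜} {N : E → Matrix κ n 𝕜}
    (hM : ∀ i j, DifferentiableAt 𝕜 (fun y => M y i j) x)
    (hN : ∀ i j, DifferentiableAt 𝕜 (fun y => N y i j) x) (i : m) (k : n) :
    DifferentiableAt 𝕜 (fun y => (M y * N y) i k) x := by
  simp only [Matrix.mul_apply]
  exact DifferentiableAt.fun_sum fun j _ => (hM i j).mul (hN j k)

theorem matrixFDeriv_mul {m n : Type*} {M : E → Matrix m κ 𝕜} {N : E → Matrix κ n 𝕜}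
    (hM : ∀ i j, DifferentiableAt 𝕜 (fun y => M y i j) x)
    (hN : ∀ i j, DifferentiableAt 𝕜 (fun y => N y i j) x) (v : E) :
    matrixFDeriv (fun y => M y * N y) x v
      = matrixFDeriv M x v * N x + M x * matrixFDeriv N x v := by
  ext i k
  simp only [matrixFDeriv, Matrix.of_apply, Matrix.mul_apply, Matrix.add_apply]
  rw [fderiv_sum_mul_apply (hM i) (fun j => hN j k), sum_add_distrib]

variable {M : E → Matrix ι ι 𝕜}

theorem fderiv_trace_apply (hM : ∀ i j, DifferentiableAt 𝕜 (fun y => M y i j) x) (v : E) :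
    fderiv 𝕜 (fun y => (M y).trace) x v = (matrixFDeriv M x v).trace := by
  simp only [Matrix.trace, Matrix.diag]
  rw [fderiv_fun_sum (A := fun i y => M y i i) fun i _ => hM i i]
  simp [matrixFDeriv]

variable [DecidableEq ι]

theorem differentiableAt_pow_apply (hM : ∀ i j, DifferentiableAt 𝕜 (fun y => M y i j) x)
    (J : ℕ) (i j : ι) : DifferentiableAt 𝕜 (fun y => (M y ^ J) i j) x := by
  induction J generalizing i j with
  | zero => simp only [pow_zero]; exact differentiableAt_const _
  | succ J ih => simp only [pow_succ]; exact differentiableAt_mul_apply ih hM i j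

theorem matrixFDeriv_pow_succ (hM : ∀ i j, DifferentiableAt 𝕜 (fun y => M y i j) x) (J : ℕ)
    (v : E) : matrixFDeriv (fun y => M y ^ (J + 1)) x v
      = ∑ i ∈ range (J + 1), M x ^ i * matrixFDeriv M x v * M x ^ (J - i) := by
  induction J with
  | zero => simp [matrixFDeriv]
  | succ J ih =>
    simp only [pow_succ _ (J + 1)]
    rw [matrixFDeriv_mul (differentiableAt_pow_apply hM _) hM, ih, sum_range_succ _ (J + 1),
      sum_mul, Nat.sub_self, pow_zero, Matrix.mul_one]
    congr 1
    refine sum_congr rfl fun i hi => ?_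
    rw [Matrix.mul_assoc, ← pow_succ, Nat.sub_add_comm (mem_range_succ_iff.1 hi)]

theorem fderiv_trace_pow_succ (hM : ∀ i j, DifferentiableAt 𝕜 (fun y => M y i j) x) (J : ℕ)
    (v : E) : fderiv 𝕜 (fun y => (M y ^ (J + 1)).trace) x v
      = (J + 1) * (M x ^ J * matrixFDeriv M x v).trace := by
  rw [fderiv_trace_apply (differentiableAt_pow_apply hM _), matrixFDeriv_pow_succ hM,
    Matrix.trace_sum]
  calc ∑ i ∈ range (J + 1), (M x ^ i * matrixFDeriv M x v * M x ^ (J - i)).trace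
      = ∑ i ∈ range (J + 1), (M x ^ J * matrixFDeriv M x v).trace := by
        refine sum_congr rfl fun i hi => ?_
        rw [Matrix.trace_mul_comm, ← Matrix.mul_assoc, ← pow_add,
          Nat.sub_add_cancel (mem_range_succ_iff.1 hi)]
    _ = _ := by simp

end MatrixCalculus

section PartialDerivatives

variable {n : ℕ}

theorem sum_pd_mul_eq_fderiv (f : (Fin n → ℝ) → ℝ) (x v : Fin n → ℝ) :
    ∑ i, pd f i x * v i = fderiv ℝ f x v := by
  conv_rhs => rw [← univ_sum_single v]
  rw [map_sum]
  refine sum_congr rfl fun i _ => ?_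
  rw [pd, mul_comm, ← smul_eq_mul, ← map_smul, ← Pi.single_smul', smul_eq_mul, mul_one]

theorem pd_sum_mul {κ : Type*} [Fintype κ] {u w : κ → (Fin n → ℝ) → ℝ} {x : Fin n → ℝ}
    (hu : ∀ l, DifferentiableAt ℝ (u l) x) (hw : ∀ l, DifferentiableAt ℝ (w l) x) (i : Fin n) :
    pd (fun y => ∑ l, u l y * w l y) i x = ∑ l, (pd (u l) i x * w l x + u l x * pd (w l) i x) :=
  fderiv_sum_mul_apply hu hw _

theorem pd_eq_zero_of_eventuallyEq_const {f : (Fin n → ℝ) → ℝ} {x : Fin n → ℝ} {c : ℝ}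
    (h : f =ᶠ[nhds x] fun _ => c) (i : Fin n) : pd f i x = 0 := by
  simp [pd, h.fderiv_eq]

theorem contDiff_pd {f : (Fin n → ℝ) → ℝ} {k m : WithTop ℕ∞} (hf : ContDiff ℝ k f)
    (hmk : m + 1 ≤ k) (i : Fin n) : ContDiff ℝ m (pd f i) :=
  (hf.fderiv_right hmk).clm_apply contDiff_const

theorem pd_comm {f : (Fin n → ℝ) → ℝ} (hf : ContDiff ℝ 2 f) (i j : Fin n) (x : Fin n → ℝ) :
    pd (pd f i) j x = pd (pd f j) i x := by
  have hsymm : IsSymmSndFDerivAt ℝ f x :=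
    hf.contDiffAt.isSymmSndFDerivAt (by simp [minSmoothness_of_isRCLikeNormedField])
  have hd : DifferentiableAt ℝ (fderiv ℝ f) x :=
    (hf.fderiv_right (m := 1) le_rfl).differentiable one_ne_zero x
  have expand : ∀ i j, pd (pd f i) j x
      = fderiv ℝ (fderiv ℝ f) x (Pi.single j 1) (Pi.single i 1) := fun i j => by
    rw [pd, show pd f i = fun y => fderiv ℝ f y (Pi.single i 1) from rfl,
      fderiv_clm_apply hd (differentiableAt_const _)]
    simp
  rw [expand, expand, hsymm.eq]

end PartialDerivatives

section Hessian

open Matrix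

variable {n : ℕ} {b : (Fin n → ℝ) → ℝ}

theorem hess_apply_comm (hb : ContDiff ℝ 2 b) (x : Fin n → ℝ) (i j : Fin n) :
    hess b x i j = hess b x j i :=
  pd_comm hb j i x

theorem differentiableAt_hess_apply (hb : ContDiff ℝ 3 b) (x : Fin n → ℝ) (i j : Fin n) :
    DifferentiableAt ℝ (fun y => hess b y i j) x :=
  ((contDiff_pd (contDiff_pd hb (m := 2) le_rfl j) (m := 1) le_rfl i).differentiable
    one_ne_zero) x

theorem pd_hess_apply_comm (hb : ContDiff ℝ 3 b) (x : Fin n → ℝ) (k l m : Fin n) :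
    pd (fun y => hess b y k l) m x = pd (fun y => hess b y k m) l x := by
  have hb2 : ContDiff ℝ 2 b := hb.of_le (by norm_num)
  change pd (pd (pd b l) k) m x = pd (pd (pd b m) k) l x
  rw [funext (pd_comm hb2 l k), pd_comm (contDiff_pd hb le_rfl k) l m, funext (pd_comm hb2 k m)]

variable {U : Set (Fin n → ℝ)}

theorem hess_mulVec_grad_eq_zero (hU : IsOpen U) (heik : ∀ x ∈ U, ∑ k, pd b k x ^ 2 = 1)
    (hb : ContDiff ℝ 2 b) {x : Fin n → ℝ} (hx : x ∈ U) :
    hess b x *ᵥ (fun l => pd b l x) = 0 := by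
  ext k
  have hg : ∀ l, DifferentiableAt ℝ (pd b l) x :=
    fun l => (contDiff_pd hb (m := 1) le_rfl l).differentiable one_ne_zero x
  have hconst : (fun y => ∑ l, pd b l y * pd b l y) =ᶠ[nhds x] fun _ => 1 :=
    Filter.eventuallyEq_of_mem (hU.mem_nhds hx) fun y hy => by simpa [sq] using heik y hy
  have h := pd_eq_zero_of_eventuallyEq_const hconst k
  rw [pd_sum_mul hg hg] at h
  have h2 : 2 * ∑ l, hess b x k l * pd b l x = 0 := by
    rw [← h, mul_sum]
    exact sum_congr rfl fun l _ => by simp only [hess, of_apply]; ring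
  simpa [mulVec, dotProduct] using h2

theorem matrixFDeriv_hess_grad (hU : IsOpen U) (heik : ∀ x ∈ U, ∑ k, pd b k x ^ 2 = 1)
    (hb : ContDiff ℝ 3 b) {x : Fin n → ℝ} (hx : x ∈ U) :
    matrixFDeriv (hess b) x (fun l => pd b l x) = -(hess b x * hess b x) := by
  have hb2 : ContDiff ℝ 2 b := hb.of_le (by norm_num)
  have hg : ∀ l, DifferentiableAt ℝ (pd b l) x :=
    fun l => (contDiff_pd hb2 (m := 1) le_rfl l).differentiable one_ne_zero x
  ext k m
  have hrow : (fun y => ∑ l, hess b y k l * pd b l y) =ᶠ[nhds x] fun _ => 0 :=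
    Filter.eventuallyEq_of_mem (hU.mem_nhds hx) fun y hy =>
      congrFun (hess_mulVec_grad_eq_zero hU heik hb2 hy) k
  have h := pd_eq_zero_of_eventuallyEq_const hrow m
  rw [pd_sum_mul (differentiableAt_hess_apply hb x k) hg, sum_add_distrib] at h
  simp only [matrixFDeriv, of_apply, ← sum_pd_mul_eq_fderiv]
  rw [neg_apply, mul_apply]
  calc ∑ l, pd (fun y => hess b y k m) l x * pd b l x
      = ∑ l, pd (fun y => hess b y k l) m x * pd b l x :=
        sum_congr rfl fun l _ => by rw [pd_hess_apply_comm hb x k m l]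
    _ = -∑ l, hess b x k l * pd (pd b l) m x := by linarith
    _ = -∑ l, hess b x k l * hess b x l m := by
        congr 1
        exact sum_congr rfl fun l _ => by rw [hess_apply_comm hb2 x l m]; rfl

end Hessian

theorem normal_deriv_trace_hessian_pow_general {n : ℕ}
    (U : Set (Fin n → ℝ)) (hU : IsOpen U)
    (b : (Fin n → ℝ) → ℝ) (hb : ContDiff ℝ (⊤ : ℕ∞) b)
    (heik : ∀ x ∈ U, ∑ k, (pd b k x) ^ 2 = 1) :
    ∀ J : ℕ, 1 ≤ J → ∀ x ∈ U,
      ∑ i, pd (fun y => Matrix.trace (hess b y ^ J)) i x * pd b i x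
        = -(J : ℝ) * Matrix.trace (hess b x ^ (J + 1)) := by
  intro J hJ x hx
  obtain ⟨J, rfl⟩ := Nat.exists_eq_add_of_le' hJ
  have hb3 : ContDiff ℝ 3 b := hb.of_le (WithTop.coe_le_coe.2 le_top)
  rw [sum_pd_mul_eq_fderiv, fderiv_trace_pow_succ (differentiableAt_hess_apply hb3 x),
    matrixFDeriv_hess_grad hU heik hb3 hx, Matrix.mul_neg, Matrix.trace_neg, ← Matrix.mul_assoc,
    ← pow_succ, ← pow_succ]
  push_cast
  ring

/-- If `b` is smooth and satisfies the eikonal identity `‖∇b‖ = 1` on an open set,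
then the derivative of `tr(H^J)` along `∇b` equals `-J·tr(H^{J+1})`. -/
theorem normal_deriv_trace_hessian_pow {n : ℕ} (hn : 1 ≤ n)
    (U : Set (Fin n → ℝ)) (hU : IsOpen U)
    (b : (Fin n → ℝ) → ℝ) (hb : ContDiff ℝ (⊤ : ℕ∞) b)
    (heik : ∀ x ∈ U, ∑ k, (pd b k x) ^ 2 = 1) :
    ∀ J : ℕ, 1 ≤ J → ∀ x ∈ U,
      ∑ i, pd (fun y => Matrix.trace (hess b y ^ J)) i x * pd b i x
        = -(J : ℝ) * Matrix.trace (hess b x ^ (J + 1)) :=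
  normal_deriv_trace_hessian_pow_general U hU b hb heik
end

section
/- Let a, c > 0 and f, f₁ > 0 be real numbers with f ≠ f₁ and a²·f·f₁ ≠ c², and set L = a·c·(f − f₁)/(a²·f·f₁ − c²). Then L ≠ 0, c satisfies the quadratic equation L·c² + a·(f − f₁)·c − L·a²·f·f₁ = 0, and c is the unique positive real root of the polynomial X ↦ L·X² + a·(f − f₁)·X − L·a²·f·f₁. -/
/-- Reconstruction of the parameter below the interface from relative amplitudes:
with `L = a c (f - f₁)/(a² f f₁ - c²)`, the quantity `L` is nonzero, `c` satisfies the
quadratic `L X² + a (f - f₁) X - L a² f f₁ = 0`, and `c` is its unique positive root. -/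
theorem parameter_unique_positive_root (a c f f₁ : ℝ)
    (ha : 0 < a) (hc : 0 < c) (hf : 0 < f) (hf₁ : 0 < f₁)
    (hff₁ : f ≠ f₁) (h₂ : a ^ 2 * f * f₁ ≠ c ^ 2) :
    a * c * (f - f₁) / (a ^ 2 * f * f₁ - c ^ 2) ≠ 0 ∧
    (a * c * (f - f₁) / (a ^ 2 * f * f₁ - c ^ 2)) * c ^ 2 + a * (f - f₁) * c
        - (a * c * (f - f₁) / (a ^ 2 * f * f₁ - c ^ 2)) * a ^ 2 * f * f₁ = 0 ∧
    ∀ x : ℝ, 0 < x →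
      (a * c * (f - f₁) / (a ^ 2 * f * f₁ - c ^ 2)) * x ^ 2 + a * (f - f₁) * x
          - (a * c * (f - f₁) / (a ^ 2 * f * f₁ - c ^ 2)) * a ^ 2 * f * f₁ = 0 →
      x = c := by
  have hD : a ^ 2 * f * f₁ - c ^ 2 ≠ 0 := sub_ne_zero.mpr h₂
  have hd : f - f₁ ≠ 0 := sub_ne_zero.mpr hff₁
  have hnum : a * c * (f - f₁) ≠ 0 := by positivity
  refine ⟨div_ne_zero hnum hD, by field_simp; ring, ?_⟩
  intro x hx heq
  have h3 : a * (f - f₁) * ((x - c) * (c * x + a ^ 2 * f * f₁)) = 0 := by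
    field_simp at heq
    nlinarith [heq]
  have h4 : (x - c) * (c * x + a ^ 2 * f * f₁) = 0 := by
    rcases mul_eq_zero.mp h3 with h | h
    · exact absurd h (by positivity)
    · exact h
  rcases mul_eq_zero.mp h4 with h | h
  · linarith [sub_eq_zero.mp h]
  · nlinarith [mul_pos hc hx, mul_pos (mul_pos (mul_pos ha ha) hf) hf₁]
end
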